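/- Let Σ be a positive-definite real n×n matrix and let Σ̄ = Matrix.diagonal (fun i => Σ i i) be the diagonal matrix formed from its diagonal entries. Then the Kullback–Leibler divergence between the centered multivariate Gaussians N(0, Σ) and N(0, Σ̄) equals (1/2) * ((∑ i, Real.log (Σ i i)) − Real.log Σ.det). In particular (Σ̄⁻¹ * Σ).trace = n and KL(N(0,Σ) ‖ N(0,Σ̄)) = (1/2)(log det Σ̄ − log det Σ). -/

import Mathlib

open MeasureTheory
open scoped BigOperators Matrix

/-- The centered multivariate Gaussian measure `N(0, S)` on `Fin n → ℝ` with
positive-definite covariance matrix `S`, defined by its density with respect to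
the Lebesgue measure. -/
noncomputable def multivariateGaussian {n : ℕ} (S : Matrix (Fin n) (Fin n) ℝ) :
    Measure (Fin n → ℝ) :=
  volume.withDensity fun x =>
    ENNReal.ofReal (Real.sqrt (((2 * Real.pi) ^ n * S.det)⁻¹) *
      Real.exp (-(1 / 2) * (x ⬝ᵥ (S⁻¹ *ᵥ x))))

/-- The Kullback–Leibler divergence `KL(μ ‖ ν) = ∫ log (dμ/dν) dμ`. -/
noncomputable def klDiv {α : Type*} [MeasurableSpace α] (μ ν : Measure α) : ℝ :=
  ∫ x, MeasureTheory.llr μ ν x ∂μ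

/-! Writing `S = L Lᵀ`, the Gaussian `N(0, S)` is the image of the standard Gaussian under
`y ↦ L y`, so `E[xᵀ A x] = tr (Lᵀ A L) = tr (A S)` for `x ∼ N(0, S)`. The log-likelihood
ratio of `N(0, S)` against `N(0, T)` is a constant plus a quadratic form, which gives
`KL(N(0, S) ‖ N(0, T)) = ½ (tr (T⁻¹ S) - n + log det T - log det S)`. When `T` is the
diagonal of `S`, `tr (T⁻¹ S) = n` and `det T = ∏ i, S i i`. -/

open Real Matrix

lemma integrable_pow_mul_exp_neg_half_sq (m : ℕ) :
    Integrable fun t : ℝ => t ^ m * exp (-(1 / 2) * t ^ 2) := by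
  simpa using integrable_rpow_mul_exp_neg_mul_sq (by norm_num : (0 : ℝ) < 1 / 2)
    (by linarith [m.cast_nonneg (α := ℝ)] : (-1 : ℝ) < m)

lemma integral_exp_neg_half_sq : ∫ t : ℝ, exp (-(1 / 2) * t ^ 2) = √(2 * π) := by
  rw [integral_gaussian]
  congr 1
  ring

lemma integral_mul_exp_neg_half_sq : ∫ t : ℝ, t * exp (-(1 / 2) * t ^ 2) = 0 := by
  have hodd : (fun t : ℝ => -t * exp (-(1 / 2) * (-t) ^ 2))
      = fun t => -(t * exp (-(1 / 2) * t ^ 2)) := by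
    ext t
    rw [neg_sq, neg_mul]
  have hsymm := integral_neg_eq_self (fun t : ℝ => t * exp (-(1 / 2) * t ^ 2)) volume
  rw [hodd, integral_neg] at hsymm
  linarith

lemma integral_sq_mul_exp_neg_half_sq :
    ∫ t : ℝ, t ^ 2 * exp (-(1 / 2) * t ^ 2) = √(2 * π) := by
  have hderiv (t : ℝ) : HasDerivAt (fun t => -t * exp (-(1 / 2) * t ^ 2))
      (t ^ 2 * exp (-(1 / 2) * t ^ 2) - exp (-(1 / 2) * t ^ 2)) t := by
    refine ((hasDerivAt_id t).neg.mul
      ((hasDerivAt_pow 2 t).const_mul (-(1 / 2) : ℝ)).exp).congr_deriv ?_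
    simp only [Pi.neg_apply, id, Nat.cast_ofNat]
    ring
  have hint₀ : Integrable fun t : ℝ => exp (-(1 / 2) * t ^ 2) :=
    integrable_exp_neg_mul_sq (by norm_num)
  have hint₁ : Integrable fun t : ℝ => -t * exp (-(1 / 2) * t ^ 2) := by
    simpa using (integrable_pow_mul_exp_neg_half_sq 1).fun_neg
  have hint₂ := integrable_pow_mul_exp_neg_half_sq 2
  have hparts := integral_eq_zero_of_hasDerivAt_of_integrable hderiv (hint₂.sub hint₀) hint₁
  rw [integral_sub hint₂ hint₀, sub_eq_zero] at hparts
  rw [hparts, integral_exp_neg_half_sq]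

section ProductMoments

variable {ι : Type*} [Fintype ι] [DecidableEq ι]

lemma mul_mul_prod_exp_neg_half_sq_eq_prod (k l : ι) :
    (fun y : ι → ℝ => y k * y l * ∏ i, exp (-(1 / 2) * y i ^ 2))
      = fun y => ∏ i, y i ^ ((if i = k then 1 else 0) + (if i = l then 1 else 0))
          * exp (-(1 / 2) * y i ^ 2) := by
  ext y
  simp only [Finset.prod_mul_distrib, pow_add, pow_ite, pow_one, pow_zero,
    Finset.prod_ite_eq', Finset.mem_univ, if_true]

lemma integrable_mul_mul_prod_exp_neg_half_sq (k l : ι) :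
    Integrable fun y : ι → ℝ => y k * y l * ∏ i, exp (-(1 / 2) * y i ^ 2) := by
  rw [mul_mul_prod_exp_neg_half_sq_eq_prod k l]
  exact Integrable.fintype_prod fun i => integrable_pow_mul_exp_neg_half_sq _

lemma integral_mul_mul_prod_exp_neg_half_sq (k l : ι) :
    ∫ y : ι → ℝ, y k * y l * ∏ i, exp (-(1 / 2) * y i ^ 2)
      = if k = l then √(2 * π) ^ Fintype.card ι else 0 := by
  rw [mul_mul_prod_exp_neg_half_sq_eq_prod k l, integral_fintype_prod_volume_eq_prod
    (f := fun i t => t ^ ((if i = k then 1 else 0) + (if i = l then 1 else 0))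
      * exp (-(1 / 2) * t ^ 2))]
  split_ifs with hkl
  · subst hkl
    rw [← Finset.card_univ, ← Finset.prod_const]
    refine Finset.prod_congr rfl fun i _ => ?_
    split_ifs
    · exact integral_sq_mul_exp_neg_half_sq
    · simpa using integral_exp_neg_half_sq
  · refine Finset.prod_eq_zero (Finset.mem_univ k) ?_
    simpa [hkl] using integral_mul_exp_neg_half_sq

end ProductMoments

lemma Matrix.mulVec_dotProduct_mulVec_mulVec {ι R : Type*} [Fintype ι] [CommSemiring R]
    (L M : Matrix ι ι R) (y : ι → R) :
    (L *ᵥ y) ⬝ᵥ (M *ᵥ (L *ᵥ y)) = y ⬝ᵥ ((Lᵀ * M * L) *ᵥ y) := by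
  rw [← mulVec_mulVec, ← mulVec_mulVec, dotProduct_mulVec y, vecMul_transpose]

section Density

variable {n : ℕ}

noncomputable def multivariateGaussianPDF (S : Matrix (Fin n) (Fin n) ℝ) (x : Fin n → ℝ) :
    ℝ :=
  √(((2 * π) ^ n * S.det)⁻¹) * exp (-(1 / 2) * (x ⬝ᵥ (S⁻¹ *ᵥ x)))

lemma multivariateGaussian_eq_withDensity (S : Matrix (Fin n) (Fin n) ℝ) :
    multivariateGaussian S
      = volume.withDensity fun x => ENNReal.ofReal (multivariateGaussianPDF S x) :=
  rfl

lemma continuous_multivariateGaussianPDF (S : Matrix (Fin n) (Fin n) ℝ) :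
    Continuous (multivariateGaussianPDF S) := by
  unfold multivariateGaussianPDF
  fun_prop

lemma multivariateGaussianPDF_nonneg (S : Matrix (Fin n) (Fin n) ℝ) (x : Fin n → ℝ) :
    0 ≤ multivariateGaussianPDF S x := by
  unfold multivariateGaussianPDF
  positivity

lemma multivariateGaussianPDF_pos {S : Matrix (Fin n) (Fin n) ℝ} (hS : 0 < S.det)
    (x : Fin n → ℝ) : 0 < multivariateGaussianPDF S x := by
  unfold multivariateGaussianPDF
  positivity

lemma log_multivariateGaussianPDF {S : Matrix (Fin n) (Fin n) ℝ} (hS : 0 < S.det)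
    (x : Fin n → ℝ) :
    log (multivariateGaussianPDF S x)
      = -(1 / 2) * (n * log (2 * π) + log S.det) - (1 / 2) * (x ⬝ᵥ (S⁻¹ *ᵥ x)) := by
  rw [multivariateGaussianPDF, log_mul (by positivity) (exp_pos _).ne', log_exp,
    log_sqrt (by positivity), log_inv, log_mul (by positivity) hS.ne', log_pow]
  ring

lemma multivariateGaussianPDF_one (y : Fin n → ℝ) :
    multivariateGaussianPDF 1 y = (√(2 * π) ^ n)⁻¹ * ∏ i, exp (-(1 / 2) * y i ^ 2) := by
  have hsqrt : √((2 * π) ^ n) = √(2 * π) ^ n := by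
    rw [sqrt_eq_iff_mul_self_eq (by positivity) (by positivity), ← mul_pow,
      mul_self_sqrt (by positivity)]
  rw [multivariateGaussianPDF, det_one, mul_one, inv_one, one_mulVec, ← exp_sum, sqrt_inv, hsqrt]
  simp only [dotProduct, Finset.mul_sum, sq]

lemma abs_det_mul_multivariateGaussianPDF_mulVec {L : Matrix (Fin n) (Fin n) ℝ}
    (hL : L.det ≠ 0) (y : Fin n → ℝ) :
    |L.det| * multivariateGaussianPDF (L * Lᵀ) (L *ᵥ y) = multivariateGaussianPDF 1 y := by
  have hinv : Lᵀ * (L * Lᵀ)⁻¹ * L = 1 := by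
    have hu : IsUnit L.det := hL.isUnit
    rw [Matrix.mul_inv_rev, Matrix.mul_assoc, Matrix.mul_assoc, nonsing_inv_mul L hu,
      Matrix.mul_one, mul_nonsing_inv Lᵀ (by rwa [det_transpose])]
  have hdet : √((2 * π) ^ n * (L * Lᵀ).det) = √((2 * π) ^ n) * |L.det| := by
    rw [det_mul, det_transpose, ← sq, sqrt_mul (by positivity), sqrt_sq_eq_abs]
  rw [multivariateGaussianPDF, multivariateGaussianPDF, mulVec_dotProduct_mulVec_mulVec, hinv,
    sqrt_inv, hdet, sqrt_inv, det_one, mul_one, inv_one]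
  field_simp

lemma map_mulVec_multivariateGaussian_one {L : Matrix (Fin n) (Fin n) ℝ} (hL : L.det ≠ 0) :
    (multivariateGaussian 1).map (L *ᵥ ·) = multivariateGaussian (L * Lᵀ) := by
  have hmeas : Measurable (L *ᵥ ·) := by fun_prop
  have hvol : (volume : Measure (Fin n → ℝ))
      = ENNReal.ofReal |L.det| • volume.map (L *ᵥ ·) := by
    simp_rw [← toLin'_apply]
    rw [map_matrix_volume_pi_eq_smul_volume_pi hL, smul_smul,
      ← ENNReal.ofReal_mul (abs_nonneg _), ← abs_mul, mul_inv_cancel₀ hL, abs_one,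
      ENNReal.ofReal_one, one_smul]
  ext s hs
  rw [Measure.map_apply hmeas hs, multivariateGaussian_eq_withDensity,
    multivariateGaussian_eq_withDensity, withDensity_apply _ (hmeas hs), withDensity_apply _ hs]
  conv_rhs => rw [hvol]
  rw [Measure.restrict_smul, lintegral_smul_measure,
    setLIntegral_map hs (continuous_multivariateGaussianPDF _).measurable.ennreal_ofReal hmeas,
    smul_eq_mul, ← lintegral_const_mul' _ _ ENNReal.ofReal_ne_top]
  refine setLIntegral_congr_fun (hmeas hs) fun y _ => ?_
  rw [← ENNReal.ofReal_mul (abs_nonneg _), abs_det_mul_multivariateGaussianPDF_mulVec hL]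

lemma integral_multivariateGaussian (S : Matrix (Fin n) (Fin n) ℝ) (g : (Fin n → ℝ) → ℝ) :
    ∫ x, g x ∂multivariateGaussian S = ∫ x, multivariateGaussianPDF S x * g x := by
  rw [multivariateGaussian_eq_withDensity, integral_withDensity_eq_integral_toReal_smul
    (continuous_multivariateGaussianPDF S).measurable.ennreal_ofReal
    (ae_of_all _ fun _ => ENNReal.ofReal_lt_top)]
  simp_rw [ENNReal.toReal_ofReal (multivariateGaussianPDF_nonneg S _), smul_eq_mul]

lemma integrable_multivariateGaussian_iff (S : Matrix (Fin n) (Fin n) ℝ)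
    {g : (Fin n → ℝ) → ℝ} :
    Integrable g (multivariateGaussian S)
      ↔ Integrable fun x => multivariateGaussianPDF S x * g x := by
  rw [multivariateGaussian_eq_withDensity, integrable_withDensity_iff_integrable_smul'
    (continuous_multivariateGaussianPDF S).measurable.ennreal_ofReal
    (ae_of_all _ fun _ => ENNReal.ofReal_lt_top)]
  simp_rw [ENNReal.toReal_ofReal (multivariateGaussianPDF_nonneg S _), smul_eq_mul]

end Density

section Standard

variable {n : ℕ}

lemma isProbabilityMeasure_multivariateGaussian_one :
    IsProbabilityMeasure (multivariateGaussian (1 : Matrix (Fin n) (Fin n) ℝ)) := by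
  have hprod : Integrable fun y : Fin n → ℝ => ∏ i, exp (-(1 / 2) * y i ^ 2) :=
    Integrable.fintype_prod fun _ => integrable_exp_neg_mul_sq (by norm_num : (0 : ℝ) < 1 / 2)
  have hpdf : Integrable fun y => multivariateGaussianPDF (1 : Matrix (Fin n) (Fin n) ℝ) y := by
    simp_rw [multivariateGaussianPDF_one]
    exact hprod.const_mul _
  constructor
  rw [multivariateGaussian_eq_withDensity, withDensity_apply _ MeasurableSet.univ,
    Measure.restrict_univ, ← ofReal_integral_eq_lintegral_ofReal hpdf
      (ae_of_all _ (multivariateGaussianPDF_nonneg 1))]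
  simp_rw [multivariateGaussianPDF_one]
  rw [integral_const_mul, integral_fintype_prod_volume_eq_pow
    (fun t => exp (-(1 / 2) * t ^ 2)), integral_exp_neg_half_sq, Fintype.card_fin,
    inv_mul_cancel₀ (by positivity), ENNReal.ofReal_one]

lemma multivariateGaussianPDF_one_mul_dotProduct_mulVec (B : Matrix (Fin n) (Fin n) ℝ)
    (y : Fin n → ℝ) :
    multivariateGaussianPDF 1 y * (y ⬝ᵥ (B *ᵥ y))
      = ∑ k, ∑ l,
          (√(2 * π) ^ n)⁻¹ * B k l * (y k * y l * ∏ i, exp (-(1 / 2) * y i ^ 2)) := by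
  simp only [multivariateGaussianPDF_one, dotProduct, mulVec, Finset.mul_sum]
  exact Finset.sum_congr rfl fun k _ => Finset.sum_congr rfl fun l _ => by ring

lemma integrable_dotProduct_mulVec_multivariateGaussian_one (B : Matrix (Fin n) (Fin n) ℝ) :
    Integrable (fun y => y ⬝ᵥ (B *ᵥ y)) (multivariateGaussian 1) := by
  simp_rw [integrable_multivariateGaussian_iff, multivariateGaussianPDF_one_mul_dotProduct_mulVec]
  exact integrable_finsetSum _ fun k _ => integrable_finsetSum _ fun l _ =>
    (integrable_mul_mul_prod_exp_neg_half_sq k l).const_mul _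

lemma integral_dotProduct_mulVec_multivariateGaussian_one (B : Matrix (Fin n) (Fin n) ℝ) :
    ∫ y, y ⬝ᵥ (B *ᵥ y) ∂multivariateGaussian 1 = B.trace := by
  have hint (k l : Fin n) := (integrable_mul_mul_prod_exp_neg_half_sq k l).const_mul
    ((√(2 * π) ^ n)⁻¹ * B k l)
  simp_rw [integral_multivariateGaussian, multivariateGaussianPDF_one_mul_dotProduct_mulVec]
  rw [integral_finsetSum _ fun k _ => integrable_finsetSum _ fun l _ => hint k l]
  simp_rw [integral_finsetSum _ fun l _ => hint _ l, integral_const_mul,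
    integral_mul_mul_prod_exp_neg_half_sq, Fintype.card_fin, mul_ite, mul_zero,
    Finset.sum_ite_eq, Finset.mem_univ, if_true]
  refine Finset.sum_congr rfl fun i _ => ?_
  rw [mul_right_comm, inv_mul_cancel₀ (by positivity), one_mul, diag_apply]

end Standard

lemma Matrix.trace_inv_diagonal_diag_mul {ι K : Type*} [Fintype ι] [DecidableEq ι] [Field K]
    {S : Matrix ι ι K} (hS : ∀ i, S i i ≠ 0) :
    ((diagonal fun i => S i i)⁻¹ * S).trace = Fintype.card ι := by
  have hinv : (diagonal fun i => S i i)⁻¹ = diagonal fun i => (S i i)⁻¹ :=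
    inv_eq_left_inv (by simp [diagonal_mul_diagonal, hS])
  simp [hinv, trace, diagonal_mul, hS]

open scoped MatrixOrder in
lemma Matrix.PosDef.exists_mul_transpose_eq {ι : Type*} [Fintype ι] [DecidableEq ι]
    {S : Matrix ι ι ℝ} (hS : S.PosDef) :
    ∃ L : Matrix ι ι ℝ, L.det ≠ 0 ∧ L * Lᵀ = S := by
  obtain ⟨B, rfl⟩ := CStarAlgebra.nonneg_iff_eq_star_mul_self.mp hS.posSemidef.nonneg
  have hstar : star B = Bᵀ := by simp [star_eq_conjTranspose]
  refine ⟨Bᵀ, fun h => hS.det_pos.ne' ?_, by rw [transpose_transpose, hstar]⟩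
  rw [hstar, det_mul, h, zero_mul]

section Covariance

variable {n : ℕ} {S : Matrix (Fin n) (Fin n) ℝ}

lemma isProbabilityMeasure_multivariateGaussian (hS : S.PosDef) :
    IsProbabilityMeasure (multivariateGaussian S) := by
  obtain ⟨L, hL, rfl⟩ := hS.exists_mul_transpose_eq
  have := isProbabilityMeasure_multivariateGaussian_one (n := n)
  rw [← map_mulVec_multivariateGaussian_one hL]
  exact Measure.isProbabilityMeasure_map (by fun_prop)

lemma integrable_dotProduct_mulVec_multivariateGaussian (hS : S.PosDef)
    (A : Matrix (Fin n) (Fin n) ℝ) :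
    Integrable (fun x => x ⬝ᵥ (A *ᵥ x)) (multivariateGaussian S) := by
  obtain ⟨L, hL, rfl⟩ := hS.exists_mul_transpose_eq
  rw [← map_mulVec_multivariateGaussian_one hL,
    integrable_map_measure (by fun_prop) (by fun_prop)]
  simpa only [Function.comp_def, mulVec_dotProduct_mulVec_mulVec]
    using integrable_dotProduct_mulVec_multivariateGaussian_one (Lᵀ * A * L)

lemma integral_dotProduct_mulVec_multivariateGaussian (hS : S.PosDef)
    (A : Matrix (Fin n) (Fin n) ℝ) :
    ∫ x, x ⬝ᵥ (A *ᵥ x) ∂multivariateGaussian S = (A * S).trace := by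
  obtain ⟨L, hL, rfl⟩ := hS.exists_mul_transpose_eq
  rw [← map_mulVec_multivariateGaussian_one hL, integral_map (by fun_prop) (by fun_prop)]
  simp_rw [mulVec_dotProduct_mulVec_mulVec]
  rw [integral_dotProduct_mulVec_multivariateGaussian_one, trace_mul_cycle, trace_mul_comm]

end Covariance

lemma llr_withDensity_ofReal {α : Type*} [MeasurableSpace α] {μ : Measure α} [SigmaFinite μ]
    {f g : α → ℝ} (hf : Measurable f) (hg : Measurable g) (hf_pos : ∀ x, 0 < f x)
    (hg_pos : ∀ x, 0 < g x) :
    llr (μ.withDensity fun x => ENNReal.ofReal (f x))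
        (μ.withDensity fun x => ENNReal.ofReal (g x))
      =ᵐ[μ.withDensity fun x => ENNReal.ofReal (f x)] fun x => log (f x) - log (g x) := by
  have hratio_meas : Measurable fun x => ENNReal.ofReal (f x / g x) := (hf.div hg).ennreal_ofReal
  have hratio : (μ.withDensity fun x => ENNReal.ofReal (g x)).withDensity
      (fun x => ENNReal.ofReal (f x / g x)) = μ.withDensity fun x => ENNReal.ofReal (f x) := by
    rw [← withDensity_mul _ hg.ennreal_ofReal hratio_meas]
    congr with x
    rw [Pi.mul_apply, ← ENNReal.ofReal_mul (hg_pos x).le, mul_div_cancel₀ _ (hg_pos x).ne']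
  have hrn := Measure.rnDeriv_withDensity (μ.withDensity fun x => ENNReal.ofReal (g x))
    hratio_meas
  have hac : (μ.withDensity fun x => ENNReal.ofReal (f x))
      ≪ μ.withDensity fun x => ENNReal.ofReal (g x) :=
    hratio ▸ withDensity_absolutelyContinuous _ _
  rw [hratio] at hrn
  filter_upwards [hac.ae_le hrn] with x hx
  simp only [llr_def, hx]
  rw [ENNReal.toReal_ofReal (div_pos (hf_pos x) (hg_pos x)).le,
    log_div (hf_pos x).ne' (hg_pos x).ne']

theorem klDiv_multivariateGaussian {n : ℕ} {S T : Matrix (Fin n) (Fin n) ℝ} (hS : S.PosDef)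
    (hT : 0 < T.det) :
    klDiv (multivariateGaussian S) (multivariateGaussian T)
      = (1 / 2) * ((T⁻¹ * S).trace - n + log T.det - log S.det) := by
  have := isProbabilityMeasure_multivariateGaussian hS
  have hllr := llr_withDensity_ofReal (μ := volume)
    (continuous_multivariateGaussianPDF S).measurable
    (continuous_multivariateGaussianPDF T).measurable (multivariateGaussianPDF_pos hS.det_pos)
    (multivariateGaussianPDF_pos hT)
  rw [← multivariateGaussian_eq_withDensity, ← multivariateGaussian_eq_withDensity] at hllr
  have hlog (x : Fin n → ℝ) :
      log (multivariateGaussianPDF S x) - log (multivariateGaussianPDF T x)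
        = (1 / 2) * (log T.det - log S.det)
          + ((1 / 2) * (x ⬝ᵥ (T⁻¹ *ᵥ x)) - (1 / 2) * (x ⬝ᵥ (S⁻¹ *ᵥ x))) := by
    rw [log_multivariateGaussianPDF hS.det_pos, log_multivariateGaussianPDF hT]
    ring
  have hqS := (integrable_dotProduct_mulVec_multivariateGaussian hS S⁻¹).const_mul (1 / 2)
  have hqT := (integrable_dotProduct_mulVec_multivariateGaussian hS T⁻¹).const_mul (1 / 2)
  have hdiff : Integrable
      (fun x => (1 / 2) * (x ⬝ᵥ (T⁻¹ *ᵥ x)) - (1 / 2) * (x ⬝ᵥ (S⁻¹ *ᵥ x)))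
      (multivariateGaussian S) := hqT.sub hqS
  rw [klDiv, integral_congr_ae (hllr.trans (ae_of_all _ hlog)),
    integral_add (integrable_const _) hdiff, integral_sub hqT hqS, integral_const,
    integral_const_mul, integral_const_mul, integral_dotProduct_mulVec_multivariateGaussian hS,
    integral_dotProduct_mulVec_multivariateGaussian hS,
    nonsing_inv_mul S hS.det_pos.ne'.isUnit, trace_one]
  simp only [probReal_univ, smul_eq_mul, one_mul, Fintype.card_fin]
  ring

/-- **Gaussian total correlation as a KL divergence.** Let `S` be positive definite
and `Sbar = diagonal (fun i => S i i)` the diagonal matrix of its diagonal entries.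
Then `KL(N(0,S) ‖ N(0,Sbar)) = (1/2)(∑ i, log (S i i) - log det S)`; in particular
`tr (Sbar⁻¹ * S) = n` and `KL(N(0,S) ‖ N(0,Sbar)) = (1/2)(log det Sbar - log det S)`. -/
theorem klDiv_gaussian_diagonal_eq_tc {n : ℕ}
    (S : Matrix (Fin n) (Fin n) ℝ) (hS : S.PosDef)
    (Sbar : Matrix (Fin n) (Fin n) ℝ)
    (hSbar : Sbar = Matrix.diagonal (fun i => S i i)) :
    klDiv (multivariateGaussian S) (multivariateGaussian Sbar)
      = (1 / 2 : ℝ) * ((∑ i, Real.log (S i i)) - Real.log S.det)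
    ∧ (Sbar⁻¹ * S).trace = (n : ℝ)
    ∧ klDiv (multivariateGaussian S) (multivariateGaussian Sbar)
        = (1 / 2 : ℝ) * (Real.log Sbar.det - Real.log S.det) := by
  have hdiag (i : Fin n) : 0 < S i i := hS.diag_pos
  have hlogdet : log Sbar.det = ∑ i, log (S i i) := by
    rw [hSbar, det_diagonal, log_prod fun i _ => (hdiag i).ne']
  have hdet : 0 < Sbar.det := by
    rw [hSbar, det_diagonal]
    exact Finset.prod_pos fun i _ => hdiag i
  have htrace : (Sbar⁻¹ * S).trace = n := by
    rw [hSbar, trace_inv_diagonal_diag_mul fun i => (hdiag i).ne', Fintype.card_fin]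
  have hkl : klDiv (multivariateGaussian S) (multivariateGaussian Sbar)
      = 1 / 2 * (log Sbar.det - log S.det) := by
    rw [klDiv_multivariateGaussian hS hdet, htrace]
    ring
  exact ⟨hlogdet ▸ hkl, htrace, hkl⟩
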